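/- arXiv:1502.02825 — 7 statements merged into one kernel-verified Lean document; each statement's English description precedes it below -/
import Mathlib

section
/- In the Cayley digraph Γ_g = Cay(Z_4 × Z_g, {(1,0),(0,1),(2,1)}) with g ≥ 3, the distance from (0,0) to a vertex (a,b) ≠ (0,0) equals â if b = 0, and equals b̂ + β(â) if b ≠ 0, where â, b̂ denote the least nonnegative representatives and β(w) = (1+(-1)^{w+1})/2 (i.e., β(w)=1 if w is odd, 0 if w is even). -/
section Defs
variable {V : Type*}

/-- There is a directed walk of length `n` from `x` to `y` in the digraph with arc relation `A`. -/
def hasPath (A : V → V → Prop) (x y : V) (n : ℕ) : Prop :=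
  ∃ f : ℕ → V, f 0 = x ∧ f n = y ∧ ∀ i < n, A (f i) (f (i+1))

/-- The distance from `x` to `y`: the length of a shortest directed path. -/
noncomputable def ddist (A : V → V → Prop) (x y : V) : ℕ :=
  sInf {n | hasPath A x y n}

/-- The two-way distance `∂̃(x,y) = (∂(x,y), ∂(y,x))`. -/
noncomputable def dtilde (A : V → V → Prop) (x y : V) : ℕ × ℕ :=
  (ddist A x y, ddist A y x)

/-- `σ` is an automorphism of the digraph with arc relation `A`. -/
def IsAuto (A : V → V → Prop) (σ : V ≃ V) : Prop :=
  ∀ u v, A u v ↔ A (σ u) (σ v)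

/-- Weakly distance-transitive digraph. -/
def WDT (A : V → V → Prop) : Prop :=
  ∀ x y x' y' : V, dtilde A x y = dtilde A x' y' →
    ∃ σ : V ≃ V, IsAuto A σ ∧ σ x = x' ∧ σ y = y'

/-- Weakly distance-regular digraph: `|P_{ĩ,j̃}(x,y)|` depends only on `∂̃(x,y)`. -/
def WDR (A : V → V → Prop) : Prop :=
  ∀ x y x' y' : V, dtilde A x y = dtilde A x' y' →
    ∀ i j : ℕ × ℕ,
      Nat.card {z : V | dtilde A x z = i ∧ dtilde A z y = j} =
      Nat.card {z : V | dtilde A x' z = i ∧ dtilde A z y' = j}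

open Classical in
/-- The binary matrix `A_{i,j}` with `(A_{i,j})_{x,y} = 1` iff `∂̃(x,y) = (i,j)`. -/
noncomputable def Amat (V : Type*) [Fintype V] (A : V → V → Prop) (i j : ℕ) : Matrix V V ℕ :=
  fun x y => if dtilde A x y = (i, j) then 1 else 0

/-- The arc relation of the Cayley digraph `Cay(Z_4 × Z_g, {(1,0),(0,1),(2,1)})`. -/
def cayA (g : ℕ) : (ZMod 4 × ZMod g) → (ZMod 4 × ZMod g) → Prop :=
  fun x y => y = x + (1,0) ∨ y = x + (0,1) ∨ y = x + (2,1)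

/-- The arc relation of the digraph `Γ_{q,s,k}` of Construction 2.2. -/
def qskA (q s k : ℕ) : (ZMod q × ZMod s) → (ZMod q × ZMod s) → Prop :=
  fun x y =>
    (y = (x.1 + 1, x.2)) ∨
    (x.2 ≠ -1 ∧ y = (x.1, x.2 + 1)) ∨
    (x.2 ≠ 0 ∧ y = (x.1 + 1, x.2 - 1)) ∨
    (x.2 = -1 ∧ y = (x.1 - (k : ZMod q) + 1, 0)) ∨
    (x.2 = 0 ∧ y = (x.1 + (k : ZMod q), -1))

end Defs

section Aux
variable {V : Type*}

lemma hasPath_refl (A : V → V → Prop) (x : V) : hasPath A x x 0 :=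
  ⟨fun _ => x, rfl, rfl, fun i hi => absurd hi (Nat.not_lt_zero i)⟩

lemma hasPath_single {A : V → V → Prop} {x y : V} (h : A x y) : hasPath A x y 1 := by
  refine ⟨fun t => if t = 0 then x else y, by simp, by simp, ?_⟩
  intro i hi
  have : i = 0 := by omega
  subst this; simpa using h

lemma hasPath_trans {A : V → V → Prop} {x y z : V} {m n : ℕ}
    (h1 : hasPath A x y m) (h2 : hasPath A y z n) : hasPath A x z (m + n) := by
  obtain ⟨f, hf0, hfm, hf⟩ := h1
  obtain ⟨p, hp0, hpn, hp⟩ := h2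
  refine ⟨fun t => if t ≤ m then f t else p (t - m), by simp [hf0], ?_, ?_⟩
  · beta_reduce
    by_cases hn : n = 0
    · subst hn
      rw [Nat.add_zero, if_pos (Nat.le_refl m), hfm, ← hp0, hpn]
    · have hc : ¬ (m + n ≤ m) := by omega
      rw [if_neg hc, Nat.add_sub_cancel_left, hpn]
  · intro i hi
    beta_reduce
    by_cases h1' : i + 1 ≤ m
    · have hi' : i ≤ m := by omega
      rw [if_pos hi', if_pos h1']
      exact hf i (by omega)
    · by_cases h2' : i ≤ m
      · have him : i = m := by omega
        rw [if_pos h2', if_neg h1', him, hfm, ← hp0,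
          show m + 1 - m = 1 from by omega]
        exact hp 0 (by omega)
      · have e2 : ¬ i + 1 ≤ m := by omega
        rw [if_neg h2', if_neg e2,
          show i + 1 - m = (i - m) + 1 from by omega]
        exact hp (i - m) (by omega)

end Aux

lemma hasPath_add (g : ℕ) (s : ZMod 4 × ZMod g)
    (hs : ∀ x : ZMod 4 × ZMod g, cayA g x (x + s)) :
    ∀ (n : ℕ) (x : ZMod 4 × ZMod g),
      hasPath (cayA g) x (x.1 + (n : ZMod 4) * s.1, x.2 + (n : ZMod g) * s.2) n := by
  intro n
  induction n with
  | zero => intro x; simpa using hasPath_refl (cayA g) x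
  | succ n ih =>
    intro x
    have h := hasPath_trans (ih x)
      (hasPath_single (hs (x.1 + (n : ZMod 4) * s.1, x.2 + (n : ZMod g) * s.2)))
    have he : ((x.1 + (n : ZMod 4) * s.1, x.2 + (n : ZMod g) * s.2) + s : ZMod 4 × ZMod g)
        = (x.1 + ((n+1 : ℕ) : ZMod 4) * s.1, x.2 + ((n+1 : ℕ) : ZMod g) * s.2) := by
      ext <;> simp [Prod.fst_add, Prod.snd_add] <;> push_cast <;> ring
    rw [he] at h
    exact h

lemma hasPath_cay (g : ℕ) (i j k : ℕ) :
    hasPath (cayA g) (0, 0)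
      (((i + 2 * k : ℕ) : ZMod 4), ((j + k : ℕ) : ZMod g)) (i + j + k) := by
  have h1 : ∀ x : ZMod 4 × ZMod g, cayA g x (x + (1,0)) := fun x => Or.inl rfl
  have h2 : ∀ x : ZMod 4 × ZMod g, cayA g x (x + (0,1)) := fun x => Or.inr (Or.inl rfl)
  have h3 : ∀ x : ZMod 4 × ZMod g, cayA g x (x + (2,1)) := fun x => Or.inr (Or.inr rfl)
  have h := hasPath_trans (hasPath_trans (hasPath_add g (1,0) h1 i (0,0))
    (hasPath_add g (0,1) h2 j _)) (hasPath_add g (2,1) h3 k _)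
  convert h using 2 <;> simp <;> push_cast <;> ring

lemma path_decomp (g : ℕ) : ∀ n (x : ZMod 4 × ZMod g), hasPath (cayA g) (0,0) x n →
    ∃ i j k : ℕ, i + j + k = n ∧ ((i : ZMod 4) + 2 * k = x.1) ∧ ((j : ZMod g) + k = x.2) := by
  intro n
  induction n with
  | zero =>
    rintro x ⟨f, h0, hn, -⟩
    refine ⟨0, 0, 0, by omega, ?_, ?_⟩ <;> rw [← hn, h0] <;> simp
  | succ n ih =>
    rintro x ⟨f, h0, hn, hstep⟩
    have hprev : hasPath (cayA g) (0,0) (f n) n :=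
      ⟨f, h0, rfl, fun i hi => hstep i (by omega)⟩
    obtain ⟨i, j, k, hsum, hh1, hh2⟩ := ih (f n) hprev
    have harc := hstep n (by omega)
    rw [hn] at harc
    rcases harc with hx | hx | hx
    · exact ⟨i + 1, j, k, by omega, by
        rw [hx]; simp [Prod.fst_add, ← hh1]; push_cast; ring, by
        rw [hx]; simp [Prod.snd_add, ← hh2]⟩
    · exact ⟨i, j + 1, k, by omega, by
        rw [hx]; simp [Prod.fst_add, ← hh1], by
        rw [hx]; simp [Prod.snd_add, ← hh2]; push_cast; ring⟩
    · exact ⟨i, j, k + 1, by omega, by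
        rw [hx]; simp [Prod.fst_add, ← hh1]; push_cast; ring, by
        rw [hx]; simp [Prod.snd_add, ← hh2]; push_cast; ring⟩

/-- distance formula in `Γ_g = Cay(Z_4 × Z_g, {(1,0),(0,1),(2,1)})`, `g ≥ 3`. -/
theorem stmt_0 (g : ℕ) (hg : 3 ≤ g) (a : ZMod 4) (b : ZMod g)
    (h : (a, b) ≠ ((0, 0) : ZMod 4 × ZMod g)) :
    ddist (cayA g) (0, 0) (a, b) = if b = 0 then a.val else b.val + a.val % 2 := by
  haveI : NeZero g := ⟨by omega⟩
  set t := if b = 0 then a.val else b.val + a.val % 2 with ht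
  have hmem : hasPath (cayA g) (0, 0) (a, b) t := by
    by_cases hb : b = 0
    · have hpath := hasPath_cay g a.val 0 0
      rw [ht]; simp only [hb, if_pos]
      subst hb
      simpa [ZMod.natCast_val, ZMod.cast_id] using hpath
    · have hav4 : a.val < 4 := ZMod.val_lt a
      have hbv1 : 1 ≤ b.val := by
        rcases Nat.eq_zero_or_pos b.val with h0 | h0
        · exact absurd ((ZMod.val_eq_zero b).mp h0) hb
        · exact h0
      have hpath := hasPath_cay g (a.val % 2) (b.val - a.val / 2) (a.val / 2)
      rw [show a.val % 2 + 2 * (a.val / 2) = a.val from by omega,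
        show b.val - a.val / 2 + a.val / 2 = b.val from by omega,
        show a.val % 2 + (b.val - a.val / 2) + a.val / 2 = b.val + a.val % 2 from by omega] at hpath
      rw [ht]; simp only [hb, if_neg, Ne, not_false_iff]
      simpa [ZMod.natCast_val, ZMod.cast_id] using hpath
  have hlb : ∀ n ∈ {n | hasPath (cayA g) (0,0) (a,b) n}, t ≤ n := by
    intro n hn
    obtain ⟨i, j, k, hsum, hh1, hh2⟩ := path_decomp g n (a, b) hn
    have ha : a.val = (i + 2 * k) % 4 := by
      have e : ((i + 2 * k : ℕ) : ZMod 4) = a := by push_cast; exact hh1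
      rw [← e, ZMod.val_natCast]
    have hbv : b.val = (j + k) % g := by
      have e : ((j + k : ℕ) : ZMod g) = b := by push_cast; exact hh2
      rw [← e, ZMod.val_natCast]
    by_cases hb : b = 0
    · rw [ht]; simp only [hb, if_pos]
      have hb0 : (j + k) % g = 0 := by rw [← hbv, hb, ZMod.val_zero]
      rcases Nat.eq_zero_or_pos (j + k) with h0 | h0
      · omega
      · have : g ≤ j + k := Nat.le_of_dvd h0 (Nat.dvd_of_mod_eq_zero hb0)
        omega
    · rw [ht]; simp only [hb, if_neg, Ne, not_false_iff]
      have hbvg : b.val < g := ZMod.val_lt b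
      have hbv1 : 1 ≤ b.val := by
        rcases Nat.eq_zero_or_pos b.val with h0 | h0
        · exact absurd ((ZMod.val_eq_zero b).mp h0) hb
        · exact h0
      have hjk : b.val ≤ j + k := by
        by_contra hc
        push_neg at hc
        have : (j + k) % g = j + k := Nat.mod_eq_of_lt (by omega)
        omega
      omega
  exact le_antisymm (Nat.sInf_le hmem) (le_csInf ⟨t, hmem⟩ hlb)
end

section
/- For g = 3 or g ≥ 5, the Cayley digraph Cay(Z_4 × Z_g, {(1,0),(0,1),(2,1)}) is weakly distance-transitive: for any vertices x, y, x', y' with (∂(x,y),∂(y,x)) = (∂(x',y'),∂(y',x')), there is an automorphism σ with σ(x)=x' and σ(y)=y'. -/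
section Aux

lemma cayA_iff (g : ℕ) (u v : ZMod 4 × ZMod g) :
    cayA g u v ↔ (v.2 = u.2 ∧ v.1 = u.1 + 1) ∨
      (v.2 = u.2 + 1 ∧ (v.1 - u.1 = 0 ∨ v.1 - u.1 = 2)) := by
  obtain ⟨u1, u2⟩ := u
  obtain ⟨v1, v2⟩ := v
  unfold cayA
  simp only [Prod.mk_add_mk, Prod.mk.injEq, add_zero]
  constructor
  · rintro (⟨h1, h2⟩ | ⟨h1, h2⟩ | ⟨h1, h2⟩)
    · exact Or.inl ⟨h2, h1⟩
    · exact Or.inr ⟨h2, Or.inl (by rw [h1]; ring)⟩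
    · exact Or.inr ⟨h2, Or.inr (by rw [h1]; ring)⟩
  · rintro (⟨h1, h2⟩ | ⟨h1, h2 | h2⟩)
    · exact Or.inl ⟨h2, h1⟩
    · exact Or.inr (Or.inl ⟨by linear_combination h2, h1⟩)
    · exact Or.inr (Or.inr ⟨by linear_combination h2, h1⟩)

lemma hasPath_iff (g : ℕ) (x y : ZMod 4 × ZMod g) (n : ℕ) :
    hasPath (cayA g) x y n ↔ ∃ m k p : ℕ, m + k + p = n ∧
      y.1 = x.1 + ((m + 2*p : ℕ) : ZMod 4) ∧ y.2 = x.2 + ((k + p : ℕ) : ZMod g) := by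
  constructor
  · intro h
    induction n generalizing y with
    | zero =>
      obtain ⟨f, h0, hn, _⟩ := h
      refine ⟨0, 0, 0, rfl, ?_, ?_⟩ <;> simp [← h0, ← hn]
    | succ n ih =>
      obtain ⟨f, h0, hn, hstep⟩ := h
      have hz : hasPath (cayA g) x (f n) n := ⟨f, h0, rfl, fun i hi => hstep i (by omega)⟩
      obtain ⟨m, k, p, hsum, h1, h2⟩ := ih (f n) hz
      have harc := hstep n (by omega)
      rcases harc with he | he | he <;> rw [hn] at he
      · refine ⟨m + 1, k, p, by omega, ?_, ?_⟩
        · rw [he]; simp only [Prod.fst_add]; rw [h1]; push_cast; ring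
        · rw [he]; simp only [Prod.snd_add]; rw [h2]; push_cast; ring
      · refine ⟨m, k + 1, p, by omega, ?_, ?_⟩
        · rw [he]; simp only [Prod.fst_add]; rw [h1]; push_cast; ring
        · rw [he]; simp only [Prod.snd_add]; rw [h2]; push_cast; ring
      · refine ⟨m, k, p + 1, by omega, ?_, ?_⟩
        · rw [he]; simp only [Prod.fst_add]; rw [h1]; push_cast; ring
        · rw [he]; simp only [Prod.snd_add]; rw [h2]; push_cast; ring
  · rintro ⟨m, k, p, hsum, h1, h2⟩
    refine ⟨fun i => (x.1 + ((min i m + 2*(i - (m+k)) : ℕ) : ZMod 4),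
                     x.2 + ((min (i-m) k + (i - (m+k)) : ℕ) : ZMod g)), ?_, ?_, ?_⟩
    · simp
    · have e1 : min n m + 2*(n - (m+k)) = m + 2*p := by omega
      have e2 : min (n-m) k + (n - (m+k)) = k + p := by omega
      beta_reduce; rw [e1, e2, ← h1, ← h2]
    · intro i hi
      unfold cayA
      rcases Nat.lt_or_ge i m with hc | hc
      · left
        have e1 : min (i+1) m + 2*((i+1) - (m+k)) = (min i m + 2*(i - (m+k))) + 1 := by omega
        have e2 : min ((i+1)-m) k + ((i+1) - (m+k)) = min (i-m) k + (i - (m+k)) := by omega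
        beta_reduce; rw [e1, e2]
        simp only [Prod.mk_add_mk, Prod.mk.injEq]
        constructor
        · push_cast; ring
        · ring
      rcases Nat.lt_or_ge i (m+k) with hc2 | hc2
      · right; left
        have e1 : min (i+1) m + 2*((i+1) - (m+k)) = min i m + 2*(i - (m+k)) := by omega
        have e2 : min ((i+1)-m) k + ((i+1) - (m+k)) = (min (i-m) k + (i - (m+k))) + 1 := by omega
        beta_reduce; rw [e1, e2]
        simp only [Prod.mk_add_mk, Prod.mk.injEq]
        constructor
        · ring
        · push_cast; ring
      · right; right
        have e1 : min (i+1) m + 2*((i+1) - (m+k)) = (min i m + 2*(i - (m+k))) + 2 := by omega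
        have e2 : min ((i+1)-m) k + ((i+1) - (m+k)) = (min (i-m) k + (i - (m+k))) + 1 := by omega
        beta_reduce; rw [e1, e2]
        simp only [Prod.mk_add_mk, Prod.mk.injEq]
        constructor
        · push_cast; ring
        · push_cast; ring

/-- The explicit distance formula for `Cay(Z_4 × Z_g, {(1,0),(0,1),(2,1)})`. -/
noncomputable def Dd (g : ℕ) (α : ZMod 4) (β : ZMod g) : ℕ :=
  if β = 0 then α.val else β.val + α.val % 2

lemma ddist_eq (g : ℕ) (hg3 : 3 ≤ g) (x y : ZMod 4 × ZMod g) :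
    ddist (cayA g) x y = Dd g (y.1 - x.1) (y.2 - x.2) := by
  haveI : NeZero g := ⟨by omega⟩
  set α : ZMod 4 := y.1 - x.1 with hα
  set β : ZMod g := y.2 - x.2 with hβ
  have hy1 : y.1 = x.1 + α := by rw [hα]; ring
  have hy2 : y.2 = x.2 + β := by rw [hβ]; ring
  have hmem : hasPath (cayA g) x y (Dd g α β) := by
    rw [hasPath_iff]
    by_cases hb : β = 0
    · refine ⟨α.val, 0, 0, by unfold Dd; rw [if_pos hb]; omega, ?_, ?_⟩
      · rw [hy1]; congr 1
        rw [show α.val + 2*0 = α.val from rfl, ZMod.natCast_val, ZMod.cast_id]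
      · rw [hy2, hb]; simp
    · have hbval : 1 ≤ β.val := by
        have h := (ZMod.val_eq_zero (n := g) β).not.mpr hb
        omega
      refine ⟨α.val % 2, β.val - α.val / 2, α.val / 2, ?_, ?_, ?_⟩
      · have : α.val < 4 := ZMod.val_lt α
        unfold Dd; rw [if_neg hb]; omega
      · rw [hy1]; congr 1
        have : α.val % 2 + 2 * (α.val / 2) = α.val := by omega
        rw [this, ZMod.natCast_val, ZMod.cast_id]
      · rw [hy2]; congr 1
        have h4 : α.val < 4 := ZMod.val_lt α
        have : β.val - α.val / 2 + α.val / 2 = β.val := by omega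
        rw [this, ZMod.natCast_val, ZMod.cast_id]
  have hlow : ∀ n, hasPath (cayA g) x y n → Dd g α β ≤ n := by
    intro n hn
    rw [hasPath_iff] at hn
    obtain ⟨m, k, p, hsum, h1, h2⟩ := hn
    have hα' : α = ((m + 2*p : ℕ) : ZMod 4) := by rw [hα, h1]; ring
    have hβ' : β = ((k + p : ℕ) : ZMod g) := by rw [hβ, h2]; ring
    have hαv : α.val = (m + 2*p) % 4 := by rw [hα', ZMod.val_natCast]
    have hβv : β.val = (k + p) % g := by rw [hβ', ZMod.val_natCast]
    by_cases hb : β = 0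
    · unfold Dd; rw [if_pos hb]
      rcases Nat.eq_zero_or_pos (k + p) with h0 | h0
      · have : p = 0 := by omega
        rw [hαv]; omega
      · have hdvd : g ∣ (k + p) := by
          have : (k+p) % g = 0 := by rw [← hβv, hb, ZMod.val_zero]
          omega
        have := Nat.le_of_dvd h0 hdvd
        have : α.val < 4 := ZMod.val_lt α
        omega
    · unfold Dd; rw [if_neg hb]
      have hle : (k + p) % g ≤ k + p := Nat.mod_le _ _
      rw [hαv, hβv]; omega
  apply le_antisymm
  · exact Nat.sInf_le hmem
  · exact le_csInf ⟨_, hmem⟩ hlow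

lemma parity_helper : ∀ a b : ZMod 4, a.val % 2 = b.val % 2 → b - a = 0 ∨ b - a = 2 := by decide

lemma neg_val_parity : ∀ a : ZMod 4, (-a).val % 2 = a.val % 2 := by decide

lemma sum_neg_val : ∀ a : ZMod 4, a.val + (-a).val = 0 ∨ a.val + (-a).val = 4 := by decide

lemma key_lemma (g : ℕ) (hg : g = 3 ∨ 5 ≤ g) (α α' : ZMod 4) (β β' : ZMod g)
    (h1 : Dd g α β = Dd g α' β') (h2 : Dd g (-α) (-β) = Dd g (-α') (-β')) :
    β' = β ∧ (α' - α = 0 ∨ α' - α = 2) ∧ (β = 0 → α' = α) := by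
  haveI : NeZero g := ⟨by omega⟩
  have hβv : β.val < g := ZMod.val_lt β
  have hβ'v : β'.val < g := ZMod.val_lt β'
  have hαv : α.val < 4 := ZMod.val_lt α
  have hα'v : α'.val < 4 := ZMod.val_lt α'
  have hnb : ∀ b : ZMod g, (-b).val = if b = 0 then 0 else g - b.val := fun b => ZMod.neg_val b
  by_cases hb : β = 0 <;> by_cases hb' : β' = 0
  · unfold Dd at h1
    rw [if_pos hb, if_pos hb'] at h1
    have heq : α = α' := ZMod.val_injective _ h1
    exact ⟨hb'.trans hb.symm, Or.inl (by rw [heq]; ring), fun _ => heq.symm⟩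
  · exfalso
    have hnb0 : (-β : ZMod g) = 0 := by rw [hb]; ring
    have hnb'0 : (-β' : ZMod g) ≠ 0 := by simpa using hb'
    unfold Dd at h1 h2
    rw [if_pos hb, if_neg hb'] at h1
    rw [if_pos hnb0, if_neg hnb'0] at h2
    rw [hnb β', neg_val_parity α'] at h2
    rw [if_neg hb'] at h2
    have hβ'1 : 1 ≤ β'.val := by have := (ZMod.val_eq_zero β').not.mpr hb'; omega
    have hs := sum_neg_val α
    omega
  · exfalso
    have hnb0 : (-β' : ZMod g) = 0 := by rw [hb']; ring
    have hnb'0 : (-β : ZMod g) ≠ 0 := by simpa using hb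
    unfold Dd at h1 h2
    rw [if_neg hb, if_pos hb'] at h1
    rw [if_neg hnb'0, if_pos hnb0] at h2
    rw [hnb β, neg_val_parity α] at h2
    rw [if_neg hb] at h2
    have hβ1 : 1 ≤ β.val := by have := (ZMod.val_eq_zero β).not.mpr hb; omega
    have hs := sum_neg_val α'
    omega
  · have hnb0 : (-β : ZMod g) ≠ 0 := by simpa using hb
    have hnb'0 : (-β' : ZMod g) ≠ 0 := by simpa using hb'
    unfold Dd at h1 h2
    rw [if_neg hb, if_neg hb'] at h1
    rw [if_neg hnb0, if_neg hnb'0] at h2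
    rw [hnb β, hnb β', neg_val_parity α, neg_val_parity α', if_neg hb, if_neg hb'] at h2
    have hβ1 : 1 ≤ β.val := by have := (ZMod.val_eq_zero β).not.mpr hb; omega
    have hβ'1 : 1 ≤ β'.val := by have := (ZMod.val_eq_zero β').not.mpr hb'; omega
    have hbb : β.val = β'.val := by omega
    have hpar : α.val % 2 = α'.val % 2 := by omega
    exact ⟨(ZMod.val_injective _ hbb).symm, parity_helper _ _ hpar, fun h => absurd h hb⟩

lemma two_helper : ∀ d w : ZMod 4, (d = 0 ∨ d = 2) →
    ((w = 0 ∨ w = 2) ↔ (w + d = 0 ∨ w + d = 2)) := by decide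

lemma sub_two_helper : ∀ a b : ZMod 4, (a = 0 ∨ a = 2) → (b = 0 ∨ b = 2) →
    (a - b = 0 ∨ a - b = 2) := by decide

lemma auto_shift (g : ℕ) (c : ZMod 4) (e : ZMod g) (s : ZMod g → ZMod 4)
    (hs : ∀ b, s b = 0 ∨ s b = 2) :
    ∃ σ : (ZMod 4 × ZMod g) ≃ (ZMod 4 × ZMod g),
      IsAuto (cayA g) σ ∧ ∀ a b, σ (a, b) = (a + c + s b, b + e) := by
  refine ⟨⟨fun v => (v.1 + c + s v.2, v.2 + e),
          fun v => (v.1 - c - s (v.2 - e), v.2 - e), ?_, ?_⟩, ?_, ?_⟩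
  · intro v
    have h : v.2 + e - e = v.2 := add_sub_cancel_right v.2 e
    refine Prod.ext ?_ ?_
    · show v.1 + c + s v.2 - c - s (v.2 + e - e) = v.1
      rw [h]; ring
    · exact h
  · intro v
    have h : v.2 - e + e = v.2 := sub_add_cancel v.2 e
    refine Prod.ext ?_ ?_
    · show v.1 - c - s (v.2 - e) + c + s (v.2 - e) = v.1
      ring
    · exact h
  · intro u v
    rw [cayA_iff, cayA_iff]
    simp only [Equiv.coe_fn_mk]
    have hd := sub_two_helper _ _ (hs v.2) (hs u.2)
    constructor
    · rintro (⟨h2, h1⟩ | ⟨h2, h1⟩)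
      · exact Or.inl ⟨by rw [h2], by rw [h2]; linear_combination h1⟩
      · refine Or.inr ⟨by rw [h2]; ring, ?_⟩
        have hr : v.1 + c + s v.2 - (u.1 + c + s u.2) = (v.1 - u.1) + (s v.2 - s u.2) := by ring
        rw [hr]
        exact (two_helper _ _ hd).mp h1
    · rintro (⟨h2, h1⟩ | ⟨h2, h1⟩)
      · have h2' : v.2 = u.2 := add_right_cancel h2
        refine Or.inl ⟨h2', ?_⟩
        rw [h2'] at h1
        linear_combination h1
      · have h2' : v.2 = u.2 + 1 := by
          have hh : v.2 + e = u.2 + 1 + e := by rw [h2]; ring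
          exact add_right_cancel hh
        refine Or.inr ⟨h2', ?_⟩
        have hr : v.1 + c + s v.2 - (u.1 + c + s u.2) = (v.1 - u.1) + (s v.2 - s u.2) := by ring
        rw [hr] at h1
        exact (two_helper _ _ hd).mpr h1
  · intro a b; rfl

end Aux

/-- for `g = 3` or `g ≥ 5`, `Cay(Z_4 × Z_g, {(1,0),(0,1),(2,1)})`
is weakly distance-transitive. -/
theorem stmt_3 (g : ℕ) (hg : g = 3 ∨ 5 ≤ g) : WDT (cayA g) := by
  have hg3 : 3 ≤ g := by omega
  haveI : NeZero g := ⟨by omega⟩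
  intro x y x' y' h
  unfold dtilde at h
  rw [Prod.mk.injEq] at h
  obtain ⟨h1, h2⟩ := h
  rw [ddist_eq g hg3 x y, ddist_eq g hg3 x' y'] at h1
  rw [ddist_eq g hg3 y x, ddist_eq g hg3 y' x'] at h2
  have h2' : Dd g (-(y.1 - x.1)) (-(y.2 - x.2)) = Dd g (-(y'.1 - x'.1)) (-(y'.2 - x'.2)) := by
    rw [neg_sub, neg_sub, neg_sub, neg_sub]; exact h2
  obtain ⟨hβ, hα2, hβ0⟩ := key_lemma g hg _ _ _ _ h1 h2'
  set δ : ZMod 4 := (y'.1 - x'.1) - (y.1 - x.1) with hδ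
  have hsv : ∀ b : ZMod g, (if b = y.2 then δ else 0) = 0 ∨ (if b = y.2 then δ else 0) = 2 := by
    intro b
    by_cases hb : b = y.2
    · rw [if_pos hb]; exact hα2
    · rw [if_neg hb]; exact Or.inl rfl
  obtain ⟨σ, hσ, hform⟩ := auto_shift g (x'.1 - x.1) (x'.2 - x.2)
    (fun b => if b = y.2 then δ else 0) hsv
  refine ⟨σ, hσ, ?_, ?_⟩
  · rw [show x = (x.1, x.2) from rfl, hform]
    have hsx : (if x.2 = y.2 then δ else 0) = 0 := by
      by_cases hxy : x.2 = y.2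
      · rw [if_pos hxy, hδ, hβ0 (by rw [hxy]; ring)]; ring
      · rw [if_neg hxy]
    rw [hsx]
    exact Prod.ext (by ring) (by ring)
  · rw [show y = (y.1, y.2) from rfl, hform, if_pos rfl]
    refine Prod.ext ?_ ?_
    · show y.1 + (x'.1 - x.1) + δ = y'.1
      rw [hδ]; ring
    · show y.2 + (x'.2 - x.2) = y'.2
      linear_combination -hβ
end

section
/- The digraph Γ_{q,s,k} (q > 2, s > 2, max{1, q−s+2} ≤ k ≤ q) is vertex transitive: for every vertex (a,b) there is an automorphism sending (0,0) to (a,b). Explicitly, the map σ(x,y) = (x+a, y+b) if ŷ ∈ {0,1,…,s−1−b̂} and σ(x,y) = (x+a−k+1, y+b) otherwise, is such an automorphism. -/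
/-- The explicit map of Lemma 2.3. -/
def qskSigma (q s k : ℕ) (a : ZMod q) (b : ZMod s) :
    (ZMod q × ZMod s) → (ZMod q × ZMod s) :=
  fun p => if p.2.val + b.val < s then (p.1 + a, p.2 + b)
    else (p.1 + a - (k : ZMod q) + 1, p.2 + b)



section AuxLemmas

lemma zmod_neg_one_val {s : ℕ} (hs : 0 < s) : (-1 : ZMod s).val = s - 1 := by
  cases s with
  | zero => omega
  | succ m => simpa using ZMod.val_neg_one m

lemma zmod_eq_iff_val {s : ℕ} [NeZero s] {z w : ZMod s} : z = w ↔ z.val = w.val :=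
  ⟨fun h => by rw [h], fun h => ZMod.val_injective s h⟩

lemma val_add_lt {s : ℕ} [NeZero s] {y b : ZMod s} (h : y.val + b.val < s) :
    (y + b).val = y.val + b.val := by
  rw [ZMod.val_add, Nat.mod_eq_of_lt h]

lemma val_add_ge {s : ℕ} [NeZero s] {y b : ZMod s} (h : s ≤ y.val + b.val) :
    (y + b).val = y.val + b.val - s := by
  have h1 := ZMod.val_lt y
  have h2 := ZMod.val_lt b
  rw [ZMod.val_add, Nat.mod_eq_sub_mod h, Nat.mod_eq_of_lt (by omega)]

lemma qsk_forward (q s k : ℕ) [NeZero q] [NeZero s] (hs : 2 < s) (a : ZMod q) (b : ZMod s) :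
    ∀ u v, qskA q s k u v → qskA q s k (qskSigma q s k a b u) (qskSigma q s k a b v) := by
  haveI : Fact (1 < s) := ⟨by omega⟩
  intro ⟨x, y⟩ ⟨x', y'⟩ h
  have hyv := ZMod.val_lt y
  have hbv := ZMod.val_lt b
  have hs0 : (0 : ZMod s).val = 0 := ZMod.val_zero
  have hneg1 : (-1 : ZMod s).val = s - 1 := zmod_neg_one_val (by omega)
  have hone : (1 : ZMod s).val = 1 := ZMod.val_one s
  rcases h with h | ⟨hy, h⟩ | ⟨hy, h⟩ | ⟨hy, h⟩ | ⟨hy, h⟩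
  · -- type 1
    simp only [Prod.mk.injEq] at h
    obtain ⟨rfl, rfl⟩ := h
    simp only [qskSigma]
    split_ifs with h1 <;> simp only [qskA] <;>
      exact Or.inl (Prod.ext (by ring) rfl)
  · -- type 2
    simp only [Prod.mk.injEq] at h
    obtain ⟨rfl, rfl⟩ := h
    simp only at hy
    rw [Ne, zmod_eq_iff_val, hneg1] at hy
    have hy1 : (y + 1).val = y.val + 1 := by
      rw [val_add_lt (by rw [hone]; omega), hone]
    simp only [qskSigma]
    split_ifs with h1 h2 h2 <;> simp only [qskA] <;> rw [hy1] at h2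
    · refine Or.inr (Or.inl ⟨?_, ?_⟩)
      · rw [Ne, zmod_eq_iff_val, val_add_lt h1, hneg1]; omega
      · exact Prod.ext rfl (by ring)
    · refine Or.inr (Or.inr (Or.inr (Or.inl ⟨?_, ?_⟩)))
      · rw [zmod_eq_iff_val, val_add_lt h1, hneg1]; omega
      · refine Prod.ext (by ring) ?_
        rw [zmod_eq_iff_val, val_add_ge (by rw [hy1]; omega), hs0, hy1]; omega
    · exfalso; omega
    · refine Or.inr (Or.inl ⟨?_, ?_⟩)
      · rw [Ne, zmod_eq_iff_val, val_add_ge (le_of_not_gt h1), hneg1]; omega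
      · exact Prod.ext rfl (by ring)
  · -- type 3
    simp only [Prod.mk.injEq] at h
    obtain ⟨rfl, rfl⟩ := h
    simp only at hy
    rw [Ne, zmod_eq_iff_val, hs0] at hy
    have hym : (y - 1).val = y.val - 1 := by
      rw [sub_eq_add_neg, val_add_ge (by rw [hneg1]; omega), hneg1]; omega
    simp only [qskSigma]
    split_ifs with h1 h2 h2 <;> simp only [qskA] <;> rw [hym] at h2
    · refine Or.inr (Or.inr (Or.inl ⟨?_, ?_⟩))
      · rw [Ne, zmod_eq_iff_val, val_add_lt h1, hs0]; omega
      · exact Prod.ext (by ring) (by ring)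
    · exfalso; omega
    · refine Or.inr (Or.inr (Or.inr (Or.inr ⟨?_, ?_⟩)))
      · rw [zmod_eq_iff_val, val_add_ge (le_of_not_gt h1), hs0]; omega
      · refine Prod.ext (by ring) ?_
        rw [zmod_eq_iff_val, val_add_lt (by rw [hym]; omega), hym, hneg1]; omega
    · refine Or.inr (Or.inr (Or.inl ⟨?_, ?_⟩))
      · rw [Ne, zmod_eq_iff_val, val_add_ge (le_of_not_gt h1), hs0]; omega
      · exact Prod.ext (by ring) (by ring)
  · -- type 4
    simp only [Prod.mk.injEq] at h
    obtain ⟨rfl, rfl⟩ := h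
    simp only at hy
    subst hy
    simp only [qskSigma]
    split_ifs with h1 h2 h2 <;> simp only [qskA] <;> rw [hneg1] at h1 <;> rw [hs0] at h2
    · have hb : b = 0 := by rw [zmod_eq_iff_val, hs0]; omega
      subst hb
      exact Or.inr (Or.inr (Or.inr (Or.inl ⟨by ring, Prod.ext (by ring) (by ring)⟩)))
    · exfalso; omega
    · refine Or.inr (Or.inl ⟨?_, ?_⟩)
      · rw [Ne, zmod_eq_iff_val, val_add_ge (by rw [hneg1]; omega), hneg1]; omega
      · exact Prod.ext (by ring) (by ring)
    · exfalso; omega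
  · -- type 5
    simp only [Prod.mk.injEq] at h
    obtain ⟨rfl, rfl⟩ := h
    simp only at hy
    subst hy
    simp only [qskSigma]
    split_ifs with h1 h2 h2 <;> simp only [qskA] <;> rw [hs0] at h1 <;> rw [hneg1] at h2
    · have hb : b = 0 := by rw [zmod_eq_iff_val, hs0]; omega
      subst hb
      exact Or.inr (Or.inr (Or.inr (Or.inr ⟨by ring, Prod.ext (by ring) (by ring)⟩)))
    · refine Or.inr (Or.inr (Or.inl ⟨?_, ?_⟩))
      · rw [Ne, zmod_eq_iff_val, val_add_lt (by rw [hs0]; omega), hs0]; omega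
      · exact Prod.ext (by ring) (by ring)
    · exfalso; omega
    · exfalso; omega

lemma qsk_inv (q s k : ℕ) [NeZero q] [NeZero s] (hs : 2 < s) (a : ZMod q) (b : ZMod s) :
    ∀ u, qskSigma q s k (if b = 0 then -a else (k : ZMod q) - 1 - a) (-b)
      (qskSigma q s k a b u) = u := by
  intro ⟨x, y⟩
  have hyv := ZMod.val_lt y
  have hbv := ZMod.val_lt b
  by_cases hb : b = 0
  · subst hb
    rw [if_pos rfl]
    simp only [qskSigma, neg_zero, add_zero, ZMod.val_zero]
    simp only [if_pos hyv]
    exact Prod.ext (by ring) (by ring)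
  · have hnb : (-b).val = s - b.val := by rw [ZMod.neg_val, if_neg hb]
    have hb1 : b.val ≠ 0 := fun h => hb ((ZMod.val_eq_zero b).mp h)
    rw [if_neg hb]
    simp only [qskSigma]
    split_ifs with h1 h2 h2
    · exfalso; rw [val_add_lt h1, hnb] at h2; omega
    · exact Prod.ext (by ring) (by ring)
    · exact Prod.ext (by ring) (by ring)
    · exfalso; rw [val_add_ge (le_of_not_gt h1), hnb] at h2; omega

end AuxLemmas

/-- `Γ_{q,s,k}` is vertex transitive, via the explicit map `qskSigma`. -/
theorem stmt_5 (q s k : ℕ) (hq : 2 < q) (hs : 2 < s)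
    (hk1 : max 1 (q + 2 - s) ≤ k) (hk2 : k ≤ q) (a : ZMod q) (b : ZMod s) :
    Function.Bijective (qskSigma q s k a b) ∧
    (∀ u v, qskA q s k u v ↔ qskA q s k (qskSigma q s k a b u) (qskSigma q s k a b v)) ∧
    qskSigma q s k a b (0, 0) = (a, b) := by
  haveI : NeZero q := ⟨by omega⟩
  haveI : NeZero s := ⟨by omega⟩
  set a' : ZMod q := if b = 0 then -a else (k : ZMod q) - 1 - a with ha'
  have hinv := qsk_inv q s k (by omega) a b
  refine ⟨?_, ?_, ?_⟩
  · have hinj : Function.Injective (qskSigma q s k a b) :=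
      Function.LeftInverse.injective hinv
    exact (Finite.injective_iff_bijective).mp hinj
  · intro u v
    constructor
    · exact qsk_forward q s k hs a b u v
    · intro h
      have := qsk_forward q s k hs a' (-b) _ _ h
      rwa [hinv, hinv] at this
  · simp only [qskSigma]
    rw [if_pos (by simpa using ZMod.val_lt b)]
    simp
end

section
/- Let Γ be a weakly distance-regular digraph of valency 3 with two types of arcs, k_{(1,q−1)} = 1, k_{(1,g−1)} = 2, q,g ≥ 3, q ≠ g. Then any circuit (x_0,…,x_{l−1}) whose closing arc (x_{l−1},x_0) has type (1,g−1) must contain another arc (x_i,x_{i+1}), 0 ≤ i ≤ l−2, of type (1,g−1). -/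
section Aux
variable {V : Type*}

lemma ddist_self' (A : V → V → Prop) (x : V) : ddist A x x = 0 := by
  apply Nat.sInf_eq_zero.mpr
  left
  exact ⟨fun _ => x, rfl, rfl, fun i hi => absurd hi (Nat.not_lt_zero i)⟩

lemma dtilde_self' (A : V → V → Prop) (x : V) : dtilde A x x = (0, 0) := by
  simp [dtilde, ddist_self']

lemma eq_of_ddist_zero' (A : V → V → Prop) (hsc : ∀ x y : V, ∃ n, hasPath A x y n)
    (x y : V) (h : ddist A x y = 0) : x = y := by
  have hne : {n | hasPath A x y n}.Nonempty := (hsc x y).imp fun n hn => hn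
  have hm := Nat.sInf_mem hne
  rw [show sInf {n | hasPath A x y n} = ddist A x y from rfl, h] at hm
  obtain ⟨p, h0, h1, -⟩ := hm
  rw [← h0, h1]

lemma dtilde_swap' (A : V → V → Prop) (x y : V) (a b : ℕ) :
    dtilde A x y = (a, b) ↔ dtilde A y x = (b, a) := by
  simp [dtilde, Prod.ext_iff, and_comm]

open Classical in
lemma natCard_set_eq_filter [Fintype V] (p : V → Prop) :
    Nat.card {z : V | p z} = (Finset.univ.filter p).card := by
  rw [Nat.card_eq_fintype_card]
  exact Fintype.card_subtype p

end Aux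


/-- a circuit whose closing arc has type `(1,g-1)` contains another
arc of type `(1,g-1)`. -/
theorem stmt_11 {V : Type*} [Fintype V] (A : V → V → Prop) (q g : ℕ)
    (hq : 3 ≤ q) (hg : 3 ≤ g) (hqg : q ≠ g)
    (hloop : ∀ x, ¬ A x x) (hsc : ∀ x y : V, ∃ n, hasPath A x y n) (hwdr : WDR A)
    (htypes : ∀ x y, A x y → dtilde A x y = (1, q - 1) ∨ dtilde A x y = (1, g - 1))
    (hk1 : ∀ x : V, Nat.card {y : V | dtilde A x y = (1, q - 1)} = 1)
    (hk2 : ∀ x : V, Nat.card {y : V | dtilde A x y = (1, g - 1)} = 2)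
    (l : ℕ) (hl : 2 ≤ l) (f : ℕ → V)
    (hf : ∀ i < l, A (f i) (f ((i + 1) % l)))
    (hclose : ddist A (f 0) (f (l - 1)) = g - 1) :
    ∃ i, i ≤ l - 2 ∧ ddist A (f (i + 1)) (f i) = g - 1 := by
  classical
  by_contra hcon
  push_neg at hcon
  have hVne : Nonempty V := ⟨f 0⟩
  -- all non-closing arcs have type (1, q-1)
  have harcq : ∀ i, i ≤ l - 2 → dtilde A (f i) (f (i + 1)) = (1, q - 1) := by
    intro i hi
    have hi' : i < l := by omega
    have hA := hf i hi'
    have hmod : (i + 1) % l = i + 1 := Nat.mod_eq_of_lt (by omega)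
    rw [hmod] at hA
    rcases htypes _ _ hA with h | h
    · exact h
    · exfalso
      apply hcon i hi
      have h2 : (dtilde A (f i) (f (i + 1))).2 = g - 1 := by rw [h]
      simpa [dtilde] using h2
  -- the closing arc has type (1, g-1)
  have hclosearc : dtilde A (f (l - 1)) (f 0) = (1, g - 1) := by
    have hl1 : l - 1 < l := by omega
    have hA := hf (l - 1) hl1
    have hmod : (l - 1 + 1) % l = 0 := by
      have h : l - 1 + 1 = l := by omega
      rw [h, Nat.mod_self]
    rw [hmod] at hA
    rcases htypes _ _ hA with h | h
    · exfalso
      have h2 : (dtilde A (f (l - 1)) (f 0)).2 = q - 1 := by rw [h]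
      have h3 : ddist A (f 0) (f (l - 1)) = q - 1 := by simpa [dtilde] using h2
      omega
    · exact h
  -- shift lemma
  have step : ∀ x y y' z : V, dtilde A x y = dtilde A x y' →
      dtilde A x z = (1, q - 1) → dtilde A z y = dtilde A z y' := by
    intro x y y' z hyy hz
    have hcard := hwdr x y x y' hyy (1, q - 1) (dtilde A z y)
    have hpos : Nat.card {w : V | dtilde A x w = (1, q - 1) ∧ dtilde A w y = dtilde A z y} ≠ 0 := by
      have hmem : z ∈ {w : V | dtilde A x w = (1, q - 1) ∧ dtilde A w y = dtilde A z y} :=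
        ⟨hz, rfl⟩
      exact Nat.card_ne_zero.mpr ⟨⟨⟨z, hmem⟩⟩, Set.toFinite _⟩
    rw [hcard] at hpos
    obtain ⟨⟨w, hw1, hw2⟩, -⟩ := Nat.card_ne_zero.mp hpos
    -- uniqueness: w = z
    have huni := hk1 x
    have hsub : (Subsingleton {y : V | dtilde A x y = (1, q - 1)}) :=
      (Nat.card_eq_one_iff_unique.mp huni).1
    have : (⟨w, hw1⟩ : {y : V | dtilde A x y = (1, q - 1)}) = ⟨z, hz⟩ :=
      hsub.elim _ _
    have hwz : w = z := congrArg Subtype.val this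
    rw [hwz] at hw2
    exact hw2.symm
  -- dtilde (f 0) (f (l-1)) determines f (l-1)
  have honly : ∀ y : V, dtilde A (f 0) y = dtilde A (f 0) (f (l - 1)) → y = f (l - 1) := by
    intro y hy
    have main : ∀ i, i ≤ l - 1 → dtilde A (f i) y = dtilde A (f i) (f (l - 1)) := by
      intro i
      induction i with
      | zero => intro _; exact hy
      | succ n ih =>
        intro hn
        have h1 : n ≤ l - 2 := by omega
        exact step (f n) y (f (l - 1)) (f (n + 1)) (ih (by omega)) (harcq n h1)
    have hfin := main (l - 1) le_rfl
    rw [dtilde_self'] at hfin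
    have h0 : ddist A (f (l - 1)) y = 0 := by
      have := congrArg Prod.fst hfin
      simpa [dtilde] using this
    exact (eq_of_ddist_zero' A hsc _ _ h0).symm
  -- in-degree of type (1,g-1) at every vertex is 2
  have hsw : ∀ x z : V, dtilde A x z = (g - 1, 1) ↔ dtilde A z x = (1, g - 1) := by
    intro x z
    exact dtilde_swap' A x z (g - 1) 1
  have hseteq : ∀ x : V,
      {z : V | dtilde A x z = (g - 1, 1) ∧ dtilde A z x = (1, g - 1)} =
      {z : V | dtilde A z x = (1, g - 1)} := by
    intro x
    ext z
    simp only [Set.mem_setOf_eq]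
    constructor
    · rintro ⟨-, h⟩; exact h
    · intro h; exact ⟨(hsw x z).mpr h, h⟩
  have hconst : ∀ x : V, Nat.card {z : V | dtilde A z x = (1, g - 1)} =
      Nat.card {z : V | dtilde A z (f 0) = (1, g - 1)} := by
    intro x
    have h1 := hwdr x x (f 0) (f 0) (by rw [dtilde_self', dtilde_self']) (g - 1, 1) (1, g - 1)
    rwa [hseteq x, hseteq (f 0)] at h1
  -- double counting
  have hsum : ∑ x : V, Nat.card {z : V | dtilde A z x = (1, g - 1)} =
      ∑ z : V, Nat.card {x : V | dtilde A z x = (1, g - 1)} := by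
    simp only [natCard_set_eq_filter, Finset.card_filter]
    exact Finset.sum_comm
  have hindeg : Nat.card {z : V | dtilde A z (f 0) = (1, g - 1)} = 2 := by
    have hrhs : ∑ z : V, Nat.card {x : V | dtilde A z x = (1, g - 1)} =
        Fintype.card V * 2 := by
      rw [Finset.sum_congr rfl fun z _ => hk2 z]
      simp [Finset.sum_const, mul_comm]
    have hlhs : ∑ x : V, Nat.card {z : V | dtilde A z x = (1, g - 1)} =
        Fintype.card V * Nat.card {z : V | dtilde A z (f 0) = (1, g - 1)} := by
      rw [Finset.sum_congr rfl fun x _ => hconst x]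
      simp [Finset.sum_const, mul_comm]
    have := hlhs.symm.trans (hsum.trans hrhs)
    exact Nat.eq_of_mul_eq_mul_left Fintype.card_pos this
  -- but that set is the singleton {f (l-1)}
  have hsing : {z : V | dtilde A z (f 0) = (1, g - 1)} = {f (l - 1)} := by
    ext z
    simp only [Set.mem_setOf_eq, Set.mem_singleton_iff]
    constructor
    · intro hz
      apply honly
      rw [(hsw (f 0) z).mpr hz, (hsw (f 0) (f (l - 1))).mpr hclosearc]
    · intro h; rw [h]; exact hclosearc
  rw [hsing] at hindeg
  simp [Nat.card_coe_set_eq, Set.ncard_singleton] at hindeg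
end

section
/- Let q ≥ 3, m ≥ 1. The digraph Γ_{q,2mq,1} is isomorphic to the Cayley digraph Cay(Z_q × Z_{2mq}, {(1,0),(0,1),(1,2mq−1)}). -/
/-- `Γ_{q,2mq,1} ≅ Cay(Z_q × Z_{2mq}, {(1,0),(0,1),(1,2mq-1)})`. -/
theorem stmt_16 (q m : ℕ) (hq : 3 ≤ q) (hm : 1 ≤ m) :
    ∃ σ : (ZMod q × ZMod (2 * m * q)) ≃ (ZMod q × ZMod (2 * m * q)),
      ∀ u v, qskA q (2 * m * q) 1 u v ↔
        (σ v = σ u + (1, 0) ∨ σ v = σ u + (0, 1) ∨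
          σ v = σ u + (1, ((2 * m * q - 1 : ℕ) : ZMod (2 * m * q)))) := by
  have hs1 : 1 ≤ 2 * m * q := Nat.one_le_iff_ne_zero.2 (by positivity)
  have hcast : ((2 * m * q - 1 : ℕ) : ZMod (2 * m * q)) = -1 := by
    rw [Nat.cast_sub hs1, Nat.cast_one, ZMod.natCast_self, zero_sub]
  refine ⟨Equiv.refl _, fun u v => ?_⟩
  simp only [Equiv.refl_apply, hcast, qskA, Nat.cast_one, Prod.ext_iff, Prod.fst_add,
    Prod.snd_add]
  constructor
  · rintro (h | ⟨h1, h2⟩ | ⟨h1, h2⟩ | ⟨h1, h2⟩ | ⟨h1, h2⟩)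
    · exact Or.inl ⟨by simp [h.1], by simp [h.2]⟩
    · exact Or.inr (Or.inl ⟨by simp [h2.1], by simp [h2.2]⟩)
    · exact Or.inr (Or.inr ⟨by simp [h2.1], by simp [h2.2, sub_eq_add_neg]⟩)
    · exact Or.inr (Or.inl ⟨by simp [h2.1], by simp [h2.2, h1]⟩)
    · exact Or.inr (Or.inr ⟨by simp [h2.1], by simp [h2.2, h1]⟩)
  · rintro (h | h | h)
    · exact Or.inl ⟨by simp [h.1], by simpa using h.2⟩
    · by_cases hb : u.2 = -1
      · exact Or.inr (Or.inr (Or.inr (Or.inl ⟨hb, by simp [h.1], by simp [h.2, hb]⟩)))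
      · exact Or.inr (Or.inl ⟨hb, by simpa using h.1, h.2⟩)
    · by_cases hb : u.2 = 0
      · exact Or.inr (Or.inr (Or.inr (Or.inr ⟨hb, h.1, by simp [h.2, hb]⟩)))
      · exact Or.inr (Or.inr (Or.inl ⟨hb, h.1, by simp [h.2, sub_eq_add_neg]⟩))
end

section
/- Let q ≥ 3, m ≥ 1. The digraph Γ_{q,mq+2,q} is isomorphic to the Cayley digraph Cay(Z_{(mq+2)q}, {1, mq+2, mq+1}), via the map (a,b) ↦ â(mq+2) + b̂ (mod (mq+2)q). -/
/-- The map `(a,b) ↦ â(mq+2) + b̂`. -/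
def qskIso (q m : ℕ) : ZMod q × ZMod (m * q + 2) → ZMod ((m * q + 2) * q) :=
  fun p => ((p.1.val * (m * q + 2) + p.2.val : ℕ) : ZMod ((m * q + 2) * q))


lemma aux_val_neg_one (s : ℕ) (h : 1 ≤ s) : (-1 : ZMod s).val = s - 1 := by
  obtain ⟨t, rfl⟩ : ∃ t, s = t + 1 := ⟨s - 1, by omega⟩
  simpa using ZMod.val_neg_one t

lemma aux_val_succ (s : ℕ) (h : 2 ≤ s) (b : ZMod s) (hb : b ≠ -1) :
    (b + 1).val = b.val + 1 := by
  haveI : NeZero s := ⟨by omega⟩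
  haveI : Fact (1 < s) := ⟨by omega⟩
  have h1 : b.val < s := b.val_lt
  have h2 : b.val ≠ s - 1 := by
    intro h'
    exact hb (ZMod.val_injective s (by rw [h', aux_val_neg_one s (by omega)]))
  rw [ZMod.val_add, ZMod.val_one, Nat.mod_eq_of_lt (by omega)]

lemma aux_val_pred (s : ℕ) (h : 2 ≤ s) (b : ZMod s) (hb : b ≠ 0) :
    b.val = (b - 1).val + 1 := by
  have h1 : b - 1 ≠ -1 := by
    intro h'
    apply hb
    have : b - 1 + 1 = -1 + 1 := by rw [h']
    simpa using this
  have := aux_val_succ s h (b - 1) h1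
  rwa [sub_add_cancel] at this

lemma aux_lt (q s a b : ℕ) (ha : a < q) (hb : b < s) : a * s + b < s * q := by
  calc a * s + b < a * s + s := by omega
    _ = (a + 1) * s := by ring
    _ ≤ q * s := Nat.mul_le_mul_right s ha
    _ = s * q := mul_comm _ _

/-- `Γ_{q,mq+2,q} ≅ Cay(Z_{(mq+2)q}, {1, mq+2, mq+1})` via `qskIso`. -/
theorem stmt_17 (q m : ℕ) (hq : 3 ≤ q) (hm : 1 ≤ m) :
    Function.Bijective (qskIso q m) ∧
    ∀ u v : ZMod q × ZMod (m * q + 2),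
      qskA q (m * q + 2) q u v ↔
        (qskIso q m v = qskIso q m u + 1 ∨
         qskIso q m v = qskIso q m u + ((m * q + 2 : ℕ) : ZMod ((m * q + 2) * q)) ∨
         qskIso q m v = qskIso q m u + ((m * q + 1 : ℕ) : ZMod ((m * q + 2) * q))) := by
  haveI : NeZero q := ⟨by omega⟩
  haveI : NeZero (m * q + 2) := ⟨by omega⟩
  haveI : NeZero ((m * q + 2) * q) := ⟨Nat.mul_ne_zero (by omega) (by omega)⟩
  haveI : Fact (1 < q) := ⟨by omega⟩
  -- value of the iso
  have hval : ∀ p : ZMod q × ZMod (m * q + 2),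
      (qskIso q m p).val = p.1.val * (m * q + 2) + p.2.val := by
    intro p
    have h1 : p.1.val * (m * q + 2) + p.2.val < (m * q + 2) * q :=
      aux_lt q (m * q + 2) _ _ p.1.val_lt p.2.val_lt
    simp only [qskIso, ZMod.val_natCast]
    exact Nat.mod_eq_of_lt h1
  have hinj : Function.Injective (qskIso q m) := by
    intro p p' h
    have h2 : p.1.val * (m * q + 2) + p.2.val = p'.1.val * (m * q + 2) + p'.2.val := by
      rw [← hval p, ← hval p', h]
    have hb : p.2.val = p'.2.val := by
      have h3 := congrArg (· % (m * q + 2)) h2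
      simpa [Nat.mul_add_mod', Nat.mod_eq_of_lt p.2.val_lt,
        Nat.mod_eq_of_lt p'.2.val_lt] using h3
    have ha : p.1.val = p'.1.val := by
      have h4 : p.1.val * (m * q + 2) = p'.1.val * (m * q + 2) := by omega
      exact Nat.eq_of_mul_eq_mul_right (by omega) h4
    exact Prod.ext (ZMod.val_injective q ha) (ZMod.val_injective _ hb)
  have hbij : Function.Bijective (qskIso q m) := by
    rw [Fintype.bijective_iff_injective_and_card]
    refine ⟨hinj, ?_⟩
    simp [ZMod.card, mul_comm]
  -- cast lemmas in ZMod ((m*q+2)*q)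
  have hqs0 : (q : ZMod ((m * q + 2) * q)) * ((m * q + 2 : ℕ) : ZMod ((m * q + 2) * q)) = 0 := by
    rw [← Nat.cast_mul, Nat.mul_comm, ZMod.natCast_self]
  have hPhi : ∀ p : ZMod q × ZMod (m * q + 2),
      qskIso q m p = (p.1.val : ZMod ((m * q + 2) * q)) * ((m * q + 2 : ℕ) : ZMod ((m * q + 2) * q))
        + (p.2.val : ZMod ((m * q + 2) * q)) := by
    intro p
    simp only [qskIso]
    push_cast
    ring
  have hA : ∀ a : ZMod q,
      (((a + 1).val : ℕ) : ZMod ((m * q + 2) * q)) * ((m * q + 2 : ℕ) : ZMod ((m * q + 2) * q))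
        = ((a.val : ZMod ((m * q + 2) * q)) + 1) * ((m * q + 2 : ℕ) : ZMod ((m * q + 2) * q)) := by
    intro a
    have h1 : (a + 1).val + q * ((a.val + 1) / q) = a.val + 1 := by
      rw [ZMod.val_add, ZMod.val_one]
      exact Nat.mod_add_div _ _
    have h2 : (((a + 1).val : ℕ) : ZMod ((m * q + 2) * q))
        + (q : ZMod ((m * q + 2) * q)) * (((a.val + 1) / q : ℕ) : ZMod ((m * q + 2) * q))
        = ((a.val : ℕ) : ZMod ((m * q + 2) * q)) + 1 := by
      exact_mod_cast congrArg (Nat.cast : ℕ → ZMod ((m * q + 2) * q)) h1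
    set S := ((m * q + 2 : ℕ) : ZMod ((m * q + 2) * q)) with hS
    set d := (((a.val + 1) / q : ℕ) : ZMod ((m * q + 2) * q)) with hd
    calc (((a + 1).val : ℕ) : ZMod ((m * q + 2) * q)) * S
        = ((((a + 1).val : ℕ) : ZMod ((m * q + 2) * q)) + (q : ZMod ((m * q + 2) * q)) * d) * S
          - ((q : ZMod ((m * q + 2) * q)) * S) * d := by ring
      _ = ((a.val : ZMod ((m * q + 2) * q)) + 1) * S := by rw [h2, hqs0]; ring
  have hv1 : (-1 : ZMod (m * q + 2)).val = m * q + 1 := by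
    rw [aux_val_neg_one _ (by omega)]
    omega
  -- the five edge equations
  have E1 : ∀ u : ZMod q × ZMod (m * q + 2),
      qskIso q m (u.1 + 1, u.2) = qskIso q m u + ((m * q + 2 : ℕ) : ZMod ((m * q + 2) * q)) := by
    intro u
    rw [hPhi, hPhi]
    simp only
    rw [hA]
    ring
  have E2 : ∀ u : ZMod q × ZMod (m * q + 2), u.2 ≠ -1 →
      qskIso q m (u.1, u.2 + 1) = qskIso q m u + 1 := by
    intro u h
    rw [hPhi, hPhi]
    simp only
    rw [aux_val_succ _ (by omega) u.2 h]
    push_cast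
    ring
  have E3 : ∀ u : ZMod q × ZMod (m * q + 2), u.2 ≠ 0 →
      qskIso q m (u.1 + 1, u.2 - 1) = qskIso q m u + ((m * q + 1 : ℕ) : ZMod ((m * q + 2) * q)) := by
    intro u h
    rw [hPhi, hPhi]
    simp only
    rw [hA, aux_val_pred _ (by omega) u.2 h]
    push_cast
    ring
  have E4 : ∀ u : ZMod q × ZMod (m * q + 2), u.2 = -1 →
      qskIso q m (u.1 - (q : ZMod q) + 1, (0 : ZMod (m * q + 2))) = qskIso q m u + 1 := by
    intro u h
    rw [ZMod.natCast_self, sub_zero, hPhi, hPhi]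
    simp only
    rw [hA, h, hv1, ZMod.val_zero]
    push_cast
    ring
  have E5 : ∀ u : ZMod q × ZMod (m * q + 2), u.2 = 0 →
      qskIso q m (u.1 + (q : ZMod q), (-1 : ZMod (m * q + 2)))
        = qskIso q m u + ((m * q + 1 : ℕ) : ZMod ((m * q + 2) * q)) := by
    intro u h
    rw [ZMod.natCast_self, add_zero, hPhi, hPhi]
    simp only
    rw [hv1, h, ZMod.val_zero]
    push_cast
    ring
  refine ⟨hbij, fun u v => ⟨fun harc => ?_, fun h => ?_⟩⟩
  · rcases harc with h | ⟨hb, h⟩ | ⟨hb, h⟩ | ⟨hb, h⟩ | ⟨hb, h⟩ <;> subst h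
    · exact Or.inr (Or.inl (E1 u))
    · exact Or.inl (E2 u hb)
    · exact Or.inr (Or.inr (E3 u hb))
    · exact Or.inl (E4 u hb)
    · exact Or.inr (Or.inr (E5 u hb))
  · rcases h with h | h | h
    · by_cases hb : u.2 = -1
      · exact Or.inr (Or.inr (Or.inr (Or.inl ⟨hb, hinj (h.trans (E4 u hb).symm)⟩)))
      · exact Or.inr (Or.inl ⟨hb, hinj (h.trans (E2 u hb).symm)⟩)
    · exact Or.inl (hinj (h.trans (E1 u).symm))
    · by_cases hb : u.2 = 0
      · exact Or.inr (Or.inr (Or.inr (Or.inr ⟨hb, hinj (h.trans (E5 u hb).symm)⟩)))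
      · exact Or.inr (Or.inr (Or.inl ⟨hb, hinj (h.trans (E3 u hb).symm)⟩))
end

section
/- In Γ_{q,s,k} with parameters satisfying condition C1 (p = 0 and k = 1), C2 (p ∈ {2, q+2} and k = q) or C3 (4 ≤ p ≤ 2q−2 even and k = q+1−p/2), where s = 2mq+p with 0 ≤ p < 2q, the following equivalence holds for every vertex (a,b): ∂((0,0),(a,b)) = â + b̂ if and only if ∂((a,b),(0,0)) = b̂ + g(a,b), where g(a,b) is the unique integer in [0,q) congruent to q − â − b̂ modulo q. -/
namespace S19

def phi (q s : ℕ) (x : ZMod q × ZMod s) : ZMod q × ZMod s := (- x.1 - (x.2.val : ZMod q), x.2)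

lemma phi_invol {q s : ℕ} (x : ZMod q × ZMod s) : phi q s (phi q s x) = x := by
  simp [phi]

variable {q s k : ℕ}

lemma natEq [NeZero q] {u v : ℕ} (hu : u < q) (hv : v < q)
    (h : (u : ZMod q) = (v : ZMod q)) : u = v := by
  rw [← ZMod.val_cast_of_lt hu, ← ZMod.val_cast_of_lt hv, h]

lemma valNegOne (hs : 2 < s) : (-1 : ZMod s).val = s - 1 := by
  obtain ⟨n, rfl⟩ : ∃ n, s = n + 1 := ⟨s - 1, by omega⟩
  exact ZMod.val_neg_one n

lemma ne_neg_one_iff [NeZero s] (hs : 2 < s) (b : ZMod s) : b ≠ -1 ↔ b.val < s - 1 := by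
  constructor
  · intro h
    have := b.val_lt
    rcases Nat.lt_or_ge b.val (s-1) with h'|h'
    · exact h'
    · exfalso; apply h
      have : b.val = s - 1 := by omega
      calc b = ((b.val : ℕ) : ZMod s) := by simp [ZMod.natCast_val]
        _ = -1 := by rw [this, ← valNegOne hs]; simp [ZMod.natCast_val]
  · intro h hb
    rw [hb, valNegOne hs] at h; omega

lemma ne_zero_iff [NeZero s] (b : ZMod s) : b ≠ 0 ↔ 0 < b.val := by
  rw [Nat.pos_iff_ne_zero, not_iff_not.symm, not_not, not_not, ZMod.val_eq_zero]

-- path 1 : straight path achieving a.val + b.val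
lemma path_A [NeZero q] [NeZero s] (hq : 2 < q) (hs : 2 < s) (a : ZMod q) (b : ZMod s) :
    hasPath (qskA q s k) (0, 0) (a, b) (a.val + b.val) := by
  refine ⟨fun i => if i ≤ a.val then ((i : ZMod q), 0) else (a, ((i - a.val : ℕ) : ZMod s)), by simp, ?_, ?_⟩
  · by_cases hb : b.val = 0
    · have : b = 0 := by rwa [← ZMod.val_eq_zero]
      simp [hb, this, ZMod.natCast_val]
    · have : ¬ (a.val + b.val ≤ a.val) := by omega
      simp only [this, if_false]
      simp [ZMod.natCast_val]
  · intro i hi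
    rcases Nat.lt_or_ge i a.val with h|h
    · have h1 : i ≤ a.val := le_of_lt h
      have h2 : i + 1 ≤ a.val := h
      simp only [h1, h2, if_true]
      left; simp
    · have h1 : ¬ (i + 1 ≤ a.val) := by omega
      have hfi : (if i ≤ a.val then (((i : ℕ) : ZMod q), (0 : ZMod s)) else (a, ((i - a.val : ℕ) : ZMod s))) = (a, ((i - a.val : ℕ) : ZMod s)) := by
        rcases Nat.eq_or_lt_of_le h with h'|h'
        · simp [← h', ZMod.natCast_val]
        · have : ¬ (i ≤ a.val) := by omega
          simp [this]
      simp only [hfi, h1, if_false]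
      right; left
      constructor
      · rw [ne_neg_one_iff hs]
        have hb := b.val_lt
        rw [ZMod.val_cast_of_lt (by omega : i - a.val < s)]
        omega
      · have : ((i + 1 - a.val : ℕ) : ZMod s) = ((i - a.val : ℕ) : ZMod s) + 1 := by
          have : i + 1 - a.val = (i - a.val) + 1 := by omega
          rw [this]; push_cast; ring
        simp [this]

def Fn (q s k : ℕ) (x : ZMod q × ZMod s) : ℕ := (x.1.val + x.2.val + 1 + (q - k) + (q*s - s)) % q

lemma Fn_lt (hq : 0 < q) (x : ZMod q × ZMod s) : Fn q s k x < q := Nat.mod_lt _ hq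

lemma castFn [NeZero q] [NeZero s] (hk2 : k ≤ q) (x : ZMod q × ZMod s) :
    ((Fn q s k x : ℕ) : ZMod q) = x.1 + (x.2.val : ZMod q) + 1 - k - s := by
  have h1 : s ≤ q * s := Nat.le_mul_of_pos_left s (by have := NeZero.pos q; omega)
  rw [Fn, ZMod.natCast_mod]
  push_cast [Nat.cast_sub hk2, Nat.cast_sub h1]
  simp [ZMod.natCast_val, ZMod.natCast_self]
  ring

lemma path_W [NeZero q] [NeZero s] (hq : 2 < q) (hs : 2 < s) (hk1 : 1 ≤ k) (hk2 : k ≤ q)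
    (a : ZMod q) (b : ZMod s) :
    hasPath (qskA q s k) (0, 0) (a, b) (s - b.val + Fn q s k (a, b)) := by
  set F := Fn q s k (a, b) with hF
  have hFq : F < q := Fn_lt (by omega) _
  have hcF : ((F : ℕ) : ZMod q) = a + (b.val : ZMod q) + 1 - k - s := castFn hk2 (a, b)
  have hbv : b.val < s := b.val_lt
  refine ⟨fun i => if i ≤ F then ((i : ZMod q), 0)
      else (((i + k - 1 : ℕ) : ZMod q), -1 - ((i - F - 1 : ℕ) : ZMod s)), by simp, ?_, ?_⟩
  · have hn : ¬ (s - b.val + F ≤ F) := by omega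
    simp only [hn, if_false]
    have e2 : ((s - b.val + F - F - 1 : ℕ) : ZMod s) = (s : ZMod s) - 1 - (b.val : ZMod s) := by
      have : s - b.val + F - F - 1 = s - 1 - b.val := by omega
      rw [this, Nat.cast_sub (by omega), Nat.cast_sub (by omega)]
      push_cast; ring
    have e1 : ((s - b.val + F + k - 1 : ℕ) : ZMod q) = a := by
      have : s - b.val + F + k - 1 = F + k + (s - 1 - b.val) := by omega
      rw [this]
      push_cast [Nat.cast_sub (by omega : b.val ≤ s - 1), Nat.cast_sub (by omega : 1 ≤ s)]
      rw [hcF]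
      simp [ZMod.natCast_val]
      ring
    rw [e1, e2]
    simp [ZMod.natCast_self, ZMod.natCast_val]
  · intro i hi
    rcases Nat.lt_or_ge i F with h|h
    · have h1 : i ≤ F := le_of_lt h
      have h2 : i + 1 ≤ F := h
      simp only [h1, h2, if_true]
      left; simp
    · rcases Nat.eq_or_lt_of_le h with h'|h'
      · -- i = F : the type-5 arc
        have h1 : i ≤ F := le_of_eq h'.symm
        have h2 : ¬ (i + 1 ≤ F) := by omega
        simp only [h1, h2, if_true, if_false]
        right; right; right; right
        refine ⟨rfl, ?_⟩
        simp only [Prod.mk.injEq]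
        constructor
        · have : i + 1 + k - 1 = i + k := by omega
          rw [this, ← h']
          push_cast
          simp [ZMod.natCast_val]
        · have : i + 1 - F - 1 = 0 := by omega
          rw [this]
          simp
      · -- i > F : type-3 arcs
        have h1 : ¬ (i ≤ F) := by omega
        have h2 : ¬ (i + 1 ≤ F) := by omega
        simp only [h1, h2, if_false]
        right; right; left
        have hj : i - F - 1 < s - 1 - b.val := by omega
        have hcast : ∀ j : ℕ, j ≤ s - 1 → (-1 - ((j : ℕ) : ZMod s)) = (((s - 1 - j : ℕ)) : ZMod s) := by
          intro j hjs
          rw [Nat.cast_sub hjs, Nat.cast_sub (by omega : 1 ≤ s)]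
          simp
        refine ⟨?_, ?_⟩
        · rw [hcast _ (by omega), Ne, ZMod.natCast_eq_zero_iff]
          intro hdvd
          have := Nat.le_of_dvd (by omega) hdvd
          omega
        · simp only [Prod.mk.injEq]
          constructor
          · have : i + 1 + k - 1 = (i + k - 1) + 1 := by omega
            rw [this]; push_cast; ring
          · have : i + 1 - F - 1 = (i - F - 1) + 1 := by omega
            rw [this]; push_cast; ring
def Wn (q s k : ℕ) (x : ZMod q × ZMod s) : ℕ := s - x.2.val + Fn q s k x

def Dn (q s k : ℕ) (x : ZMod q × ZMod s) : ℕ := min (x.1.val + x.2.val) (Wn q s k x)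

lemma lipschitz [NeZero q] [NeZero s] (hq : 2 < q) (hs : 2 < s) (hk1 : 1 ≤ k) (hk2 : k ≤ q)
    (hs2k : (s : ZMod q) = 2 - 2 * k) {x y : ZMod q × ZMod s} (hxy : qskA q s k x y) :
    Dn q s k y ≤ Dn q s k x + 1 := by
  haveI : Fact (1 < q) := ⟨by omega⟩
  have hFx : Fn q s k x < q := Fn_lt (by omega) x
  have hFy : Fn q s k y < q := Fn_lt (by omega) y
  have hbx : x.2.val < s := x.2.val_lt
  have hax : x.1.val < q := x.1.val_lt
  have cFx := castFn (s := s) hk2 x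
  have cFy := castFn (s := s) hk2 y
  have cvala : ((x.1.val : ℕ) : ZMod q) = x.1 := by simp [ZMod.natCast_val]
  -- generic: val of +1 in ZMod q
  have val_q_succ : ∀ z : ZMod q, (z + 1).val = (z.val + 1) % q := by
    intro z; rw [ZMod.val_add, ZMod.val_one]
  rcases hxy with h | ⟨hb, h⟩ | ⟨hb, h⟩ | ⟨hb, h⟩ | ⟨hb, h⟩ <;> subst h
  · -- type 1
    have hay : (x.1 + 1).val ≤ x.1.val + 1 := by rw [val_q_succ]; exact Nat.mod_le _ _
    have hFy' : Fn q s k (x.1 + 1, x.2) ≤ Fn q s k x + 1 := by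
      have : Fn q s k (x.1 + 1, x.2) = (Fn q s k x + 1) % q := by
        refine natEq hFy (Nat.mod_lt _ (by omega)) ?_
        rw [ZMod.natCast_mod, cFy]
        push_cast [cFx]
        ring
      rw [this]; exact Nat.mod_le _ _
    simp only [Dn, Wn] at *
    omega
  · -- type 2
    have hbx1 : x.2.val < s - 1 := (ne_neg_one_iff hs x.2).mp hb
    have hby : (x.2 + 1).val = x.2.val + 1 := by
      have : x.2 + 1 = ((x.2.val + 1 : ℕ) : ZMod s) := by push_cast [ZMod.natCast_val]; simp
      rw [this, ZMod.val_cast_of_lt (by omega)]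
    have hFy' : Fn q s k (x.1, x.2 + 1) ≤ Fn q s k x + 1 := by
      have : Fn q s k (x.1, x.2 + 1) = (Fn q s k x + 1) % q := by
        refine natEq hFy (Nat.mod_lt _ (by omega)) ?_
        rw [ZMod.natCast_mod, cFy]
        push_cast [cFx, hby]
        ring
      rw [this]; exact Nat.mod_le _ _
    simp only [Dn, Wn] at *
    omega
  · -- type 3
    have hbx1 : 0 < x.2.val := (ne_zero_iff x.2).mp hb
    have hay : (x.1 + 1).val ≤ x.1.val + 1 := by rw [val_q_succ]; exact Nat.mod_le _ _
    have hby : (x.2 - 1).val = x.2.val - 1 := by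
      have : x.2 - 1 = ((x.2.val - 1 : ℕ) : ZMod s) := by
        rw [Nat.cast_sub (by omega)]; push_cast [ZMod.natCast_val]; simp
      rw [this, ZMod.val_cast_of_lt (by omega)]
    have hFy' : Fn q s k (x.1 + 1, x.2 - 1) = Fn q s k x := by
      refine natEq hFy hFx ?_
      rw [cFy, cFx]
      simp only [hby]
      rw [Nat.cast_sub (by omega : 1 ≤ x.2.val)]
      push_cast
      ring
    simp only [Dn, Wn] at *
    omega
  · -- type 4 : wrap from b = -1
    have hbx1 : x.2.val = s - 1 := by rw [hb, valNegOne hs]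
    have hcastb : ((x.2.val : ℕ) : ZMod q) = (s : ZMod q) - 1 := by
      rw [hbx1, Nat.cast_sub (by omega : 1 ≤ s)]; simp
    have hby : (0 : ZMod s).val = 0 := ZMod.val_zero
    have hFy' : Fn q s k (x.1 - k + 1, 0) = x.1.val := by
      refine natEq hFy hax ?_
      rw [cFy, cvala]
      simp only [ZMod.val_zero, Nat.cast_zero, hs2k]
      ring
    have hay : (x.1 - k + 1).val ≤ Fn q s k x + 1 := by
      have : (x.1 - k + 1).val = (Fn q s k x + 1) % q := by
        refine natEq (ZMod.val_lt _) (Nat.mod_lt _ (by omega)) ?_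
        rw [ZMod.natCast_mod]
        push_cast [ZMod.natCast_val, ZMod.cast_id, cFx, hcastb]
        ring
      rw [this]; exact Nat.mod_le _ _
    simp only [Dn, Wn] at *
    omega
  · -- type 5 : wrap from b = 0
    have hbx1 : x.2.val = 0 := by rw [hb, ZMod.val_zero]
    have hby : (-1 : ZMod s).val = s - 1 := valNegOne hs
    have hFy' : Fn q s k (x.1 + k, -1) = x.1.val := by
      refine natEq hFy hax ?_
      rw [cFy, cvala]
      simp only [hby]
      rw [Nat.cast_sub (by omega : 1 ≤ s)]
      push_cast
      ring
    have hay : (x.1 + k).val ≤ Fn q s k x + 1 := by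
      have : (x.1 + k).val = (Fn q s k x + 1) % q := by
        refine natEq (ZMod.val_lt _) (Nat.mod_lt _ (by omega)) ?_
        rw [ZMod.natCast_mod]
        push_cast [ZMod.natCast_val, ZMod.cast_id, cFx, hbx1, hs2k]
        ring
      rw [this]; exact Nat.mod_le _ _
    simp only [Dn, Wn] at *
    omega

lemma walk_bound [NeZero q] [NeZero s] (hq : 2 < q) (hs : 2 < s) (hk1 : 1 ≤ k) (hk2 : k ≤ q)
    (hs2k : (s : ZMod q) = 2 - 2 * k) (n : ℕ) (f : ℕ → ZMod q × ZMod s)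
    (h0 : f 0 = (0, 0)) (harc : ∀ i < n, qskA q s k (f i) (f (i+1))) :
    Dn q s k (f n) ≤ n := by
  induction n with
  | zero => simp [h0, Dn]
  | succ n ih =>
    have h1 : Dn q s k (f n) ≤ n := ih (fun i hi => harc i (by omega))
    have h2 := lipschitz hq hs hk1 hk2 hs2k (harc n (by omega))
    omega

lemma ddist_eq [NeZero q] [NeZero s] (hq : 2 < q) (hs : 2 < s) (hk1 : 1 ≤ k) (hk2 : k ≤ q)
    (hs2k : (s : ZMod q) = 2 - 2 * k) (x : ZMod q × ZMod s) :
    ddist (qskA q s k) (0, 0) x = Dn q s k x := by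
  apply le_antisymm
  · rw [Dn]
    rcases min_cases (x.1.val + x.2.val) (Wn q s k x) with ⟨hm, _⟩ | ⟨hm, _⟩ <;> rw [hm]
    · exact Nat.sInf_le (path_A hq hs x.1 x.2)
    · have := path_W (k := k) hq hs hk1 hk2 x.1 x.2
      exact Nat.sInf_le (by simpa [Wn] using this)
  · refine le_csInf ⟨_, path_A hq hs x.1 x.2⟩ ?_
    rintro n ⟨f, h0, hn, harc⟩
    exact hn ▸ walk_bound hq hs hk1 hk2 hs2k n f h0 harc

lemma anti [NeZero q] [NeZero s] (hq : 2 < q) (hs : 2 < s) (hk1 : 1 ≤ k) (hk2 : k ≤ q)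
    (hs2k : (s : ZMod q) = 2 - 2 * k) {x y : ZMod q × ZMod s} (hxy : qskA q s k x y) :
    qskA q s k (phi q s y) (phi q s x) := by
  have casts : ((s : ℕ) : ZMod s) = 0 := ZMod.natCast_self s
  rcases hxy with h | ⟨hb, h⟩ | ⟨hb, h⟩ | ⟨hb, h⟩ | ⟨hb, h⟩ <;> subst h <;> simp only [phi, qskA]
  · left
    simp only [Prod.mk.injEq]
    refine ⟨by ring, ?_⟩
    trivial
  · -- up-step reverses to a type-3 diagonal step
    right; right; left
    have hbx1 : x.2.val < s - 1 := (ne_neg_one_iff hs x.2).mp hb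
    have hby : ((x.2 + 1).val : ZMod q) = (x.2.val : ZMod q) + 1 := by
      have : x.2 + 1 = ((x.2.val + 1 : ℕ) : ZMod s) := by push_cast [ZMod.natCast_val]; simp
      rw [this, ZMod.val_cast_of_lt (by omega)]
      push_cast; ring
    refine ⟨?_, ?_⟩
    · intro hzero
      exact hb (eq_neg_of_add_eq_zero_left hzero)
    · simp only [Prod.mk.injEq, hby]
      exact ⟨by ring, by ring⟩
  · -- diagonal step reverses to type-2 up-step
    right; left
    have hbx1 : 0 < x.2.val := (ne_zero_iff x.2).mp hb
    have hby : ((x.2 - 1).val : ZMod q) = (x.2.val : ZMod q) - 1 := by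
      have hv : x.2.val < s := x.2.val_lt
      have : x.2 - 1 = ((x.2.val - 1 : ℕ) : ZMod s) := by
        rw [Nat.cast_sub (by omega)]; push_cast [ZMod.natCast_val]; simp
      rw [this, ZMod.val_cast_of_lt (by omega : x.2.val - 1 < s), Nat.cast_sub (by omega)]
      push_cast; ring
    refine ⟨?_, ?_⟩
    · intro hneg
      apply hb
      have : x.2 = -1 + 1 := by rw [← hneg]; ring
      simpa using this
    · simp only [Prod.mk.injEq, hby]
      exact ⟨by ring, by ring⟩
  · -- b = -1 wrap reverses to type-5 wrap
    right; right; right; right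
    have h1 : (((-1 : ZMod s).val : ℕ) : ZMod q) = 1 - 2*(k:ZMod q) := by
      rw [valNegOne hs, Nat.cast_sub (by omega : 1 ≤ s), hs2k]; ring
    refine ⟨by trivial, ?_⟩
    simp only [Prod.mk.injEq, hb, h1, ZMod.val_zero, Nat.cast_zero]
    refine ⟨by ring, ?_⟩
    trivial
  · -- b = 0 wrap reverses to type-4 wrap
    right; right; right; left
    have h1 : (((-1 : ZMod s).val : ℕ) : ZMod q) = 1 - 2*(k:ZMod q) := by
      rw [valNegOne hs, Nat.cast_sub (by omega : 1 ≤ s), hs2k]; ring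
    refine ⟨by trivial, ?_⟩
    simp only [Prod.mk.injEq, hb, h1, ZMod.val_zero, Nat.cast_zero]
    refine ⟨by ring, ?_⟩
    trivial

lemma hasPath_phi [NeZero q] [NeZero s] (hq : 2 < q) (hs : 2 < s) (hk1 : 1 ≤ k) (hk2 : k ≤ q)
    (hs2k : (s : ZMod q) = 2 - 2 * k) {u v : ZMod q × ZMod s} {n : ℕ}
    (h : hasPath (qskA q s k) u v n) : hasPath (qskA q s k) (phi q s v) (phi q s u) n := by
  obtain ⟨f, h0, hn, harc⟩ := h
  refine ⟨fun i => phi q s (f (n - i)), by simp [hn], by simp [h0], ?_⟩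
  intro i hi
  have e1 : n - i = (n - (i+1)) + 1 := by omega
  show qskA q s k (phi q s (f (n - i))) (phi q s (f (n - (i+1))))
  rw [e1]
  exact anti hq hs hk1 hk2 hs2k (harc (n - (i+1)) (by omega))

lemma phi_zero [NeZero q] [NeZero s] : phi q s ((0 : ZMod q), (0 : ZMod s)) = (0, 0) := by
  simp [phi]

lemma ddist_phi [NeZero q] [NeZero s] (hq : 2 < q) (hs : 2 < s) (hk1 : 1 ≤ k) (hk2 : k ≤ q)
    (hs2k : (s : ZMod q) = 2 - 2 * k) (x : ZMod q × ZMod s) :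
    ddist (qskA q s k) x (0, 0) = ddist (qskA q s k) (0, 0) (phi q s x) := by
  unfold ddist
  congr 1
  ext n
  constructor
  · intro h
    have := hasPath_phi hq hs hk1 hk2 hs2k h
    rwa [phi_zero] at this
  · intro h
    have := hasPath_phi hq hs hk1 hk2 hs2k h
    rwa [phi_zero, phi_invol] at this

lemma dvd_eq_self {Q D : ℤ} (hQ : 0 < Q) (hd : Q ∣ D) (h1 : 0 < D) (h2 : D < 2*Q) : D = Q := by
  have hge := Int.le_of_dvd h1 hd
  rcases eq_or_lt_of_le hge with h | h
  · omega
  · have hd2 : Q ∣ D - Q := dvd_sub hd dvd_rfl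
    have := Int.le_of_dvd (by omega) hd2
    omega

lemma arith_dir [NeZero q] [NeZero s] (hq : 2 < q) (hs : 2 < s) (hk1 : 1 ≤ k) (hk2 : k ≤ q)
    {c : ℕ} (hcq : s + 2*k = c*q + 2) (hpar : Even c ∨ k = q) (x : ZMod q × ZMod s)
    (hx : x.1.val + x.2.val ≤ Wn q s k x) :
    (phi q s x).1.val + (phi q s x).2.val ≤ Wn q s k (phi q s x) := by
  have hs2k : (s : ZMod q) = 2 - 2*(k : ZMod q) := by
    have := congrArg (fun t : ℕ => (t : ZMod q)) hcq
    push_cast at this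
    rw [ZMod.natCast_self] at this
    linear_combination this
  have hphi2 : (phi q s x).2 = x.2 := rfl
  have hβ : x.2.val < s := x.2.val_lt
  have hα : x.1.val < q := x.1.val_lt
  have hG : (phi q s x).1.val < q := (phi q s x).1.val_lt
  have hF1 : Fn q s k x < q := Fn_lt (by omega) x
  have hF2 : Fn q s k (phi q s x) < q := Fn_lt (by omega) _
  -- ZMod q cast facts
  have cα : ((x.1.val : ℕ) : ZMod q) = x.1 := by simp [ZMod.natCast_val]
  have cG : (((phi q s x).1.val : ℕ) : ZMod q) = - x.1 - ((x.2.val : ℕ) : ZMod q) := by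
    simp [phi, ZMod.natCast_val]
  have cf1 : ((Fn q s k x : ℕ) : ZMod q) = x.1 + (x.2.val : ZMod q) + 1 - k - s :=
    castFn hk2 x
  have cf2 : ((Fn q s k (phi q s x) : ℕ) : ZMod q) = - x.1 + 1 - k - s := by
    rw [castFn hk2 (phi q s x)]
    simp only [phi]
    ring
  -- integer divisibilities
  have dv1 : (q : ℤ) ∣ (((phi q s x).1.val : ℤ) - Fn q s k (phi q s x)
      - x.1.val + Fn q s k x) := by
    rw [← ZMod.intCast_zmod_eq_zero_iff_dvd]
    push_cast
    rw [cα, cG, cf1, cf2]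
    ring
  have dv2 : (q : ℤ) ∣ ((x.2.val : ℤ) + ((phi q s x).1.val - Fn q s k (phi q s x)) + k - 1) := by
    rw [← ZMod.intCast_zmod_eq_zero_iff_dvd]
    push_cast
    rw [cG, cf2, hs2k]
    ring
  have dv3 : (q : ℤ) ∣ ((Fn q s k (phi q s x) : ℤ) + x.1.val + 1 - k) := by
    rw [← ZMod.intCast_zmod_eq_zero_iff_dvd]
    push_cast
    rw [cα, cf2, hs2k]
    ring
  -- pass to integers
  by_contra hbad
  push_neg at hbad
  rw [Wn, hphi2] at hbad
  rw [Wn] at hx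
  have hxZ : (x.1.val : ℤ) + x.2.val ≤ (s : ℤ) - x.2.val + Fn q s k x := by
    have := hx
    zify [Nat.le_of_lt hβ] at this
    linarith
  have hbadZ : (s : ℤ) - x.2.val + Fn q s k (phi q s x) < ((phi q s x).1.val : ℤ) + x.2.val := by
    have := hbad
    zify [Nat.le_of_lt hβ] at this
    linarith
  have hcqZ : (s : ℤ) + 2*k = c*q + 2 := by exact_mod_cast congrArg (Nat.cast : ℕ → ℤ) hcq
  set A := (x.1.val : ℤ) with hA
  set B := (x.2.val : ℤ) with hB
  set Gz := ((phi q s x).1.val : ℤ) with hGz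
  set F1 := (Fn q s k x : ℤ) with hF1z
  set F2 := (Fn q s k (phi q s x) : ℤ) with hF2z
  have bA : 0 ≤ A ∧ A < q := ⟨hA ▸ Int.natCast_nonneg _, hA ▸ (by exact_mod_cast hα : (x.1.val : ℤ) < q)⟩
  have bG : 0 ≤ Gz ∧ Gz < q := ⟨hGz ▸ Int.natCast_nonneg _, hGz ▸ (by exact_mod_cast hG : ((phi q s x).1.val : ℤ) < q)⟩
  have bF1 : 0 ≤ F1 ∧ F1 < q := ⟨hF1z ▸ Int.natCast_nonneg _, hF1z ▸ (by exact_mod_cast hF1 : (Fn q s k x : ℤ) < q)⟩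
  have bF2 : 0 ≤ F2 ∧ F2 < q := ⟨hF2z ▸ Int.natCast_nonneg _, hF2z ▸ (by exact_mod_cast hF2 : (Fn q s k (phi q s x) : ℤ) < q)⟩
  have bB : 0 ≤ B ∧ B < s := ⟨hB ▸ Int.natCast_nonneg _, hB ▸ (by exact_mod_cast hβ : (x.2.val : ℤ) < s)⟩
  have hqZ : 2 < (q : ℤ) := by exact_mod_cast hq
  have hsZ : 2 < (s : ℤ) := by exact_mod_cast hs
  have hkZ : 1 ≤ (k : ℤ) ∧ (k : ℤ) ≤ q := ⟨by exact_mod_cast hk1, by exact_mod_cast hk2⟩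
  -- step 1 : the defect difference equals q
  have hD1 : Gz - F2 - A + F1 = q := by
    apply dvd_eq_self (by omega) dv1 <;> omega
  -- case split
  rcases hpar with hEven | hkq
  · -- even case : parity contradiction
    obtain ⟨J, hJ⟩ := dv2
    have key : (q : ℤ) * (2*J - c) = (Gz + 2*B - F2 - s) + (Gz - F2) := by
      linear_combination (-2) * hJ + hcqZ
    have hdd : (q : ℤ) ∣ ((Gz + 2*B - F2 - s) + (Gz - F2)) := ⟨2*J - c, key.symm⟩
    have hDD : (Gz + 2*B - F2 - s) + (Gz - F2) = q := by
      apply dvd_eq_self (by omega) hdd <;> omega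
    have h2J : 2*J - c = 1 := by
      have hq0 : (q : ℤ) ≠ 0 := by omega
      have : (q : ℤ) * (2*J - c) = (q : ℤ) * 1 := by rw [key, hDD]; ring
      exact mul_left_cancel₀ hq0 this
    obtain ⟨c2, hc2⟩ := hEven
    have : (c : ℤ) = c2 + c2 := by exact_mod_cast congrArg (Nat.cast : ℕ → ℤ) hc2
    omega
  · -- k = q case
    have hkqZ : (k : ℤ) = q := by exact_mod_cast congrArg (Nat.cast : ℕ → ℤ) hkq
    have dv3' : (q : ℤ) ∣ (F2 + A + 1) := by
      have : F2 + A + 1 = (F2 + A + 1 - k) + q := by rw [hkqZ]; ring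
      rw [this]
      exact dvd_add dv3 dvd_rfl
    have hF2A : F2 + A + 1 = q := by
      apply dvd_eq_self (by omega) dv3' <;> omega
    omega

lemma cond_c (hq : 2 < q) {m p : ℕ} (hsp : s = 2 * m * q + p) (hp2q : p < 2 * q)
    (hC : (p = 0 ∧ k = 1) ∨ ((p = 2 ∨ p = q + 2) ∧ k = q) ∨
      (4 ≤ p ∧ p ≤ 2 * q - 2 ∧ Even p ∧ k = q + 1 - p / 2)) :
    ∃ c : ℕ, s + 2 * k = c * q + 2 ∧ (Even c ∨ k = q) := by
  rcases hC with ⟨hp, hk⟩ | ⟨hp, hk⟩ | ⟨hp4, hple, hpe, hk⟩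
  · exact ⟨2 * m, by subst hsp hp hk; ring, Or.inl ⟨m, by ring⟩⟩
  · rcases hp with rfl | rfl
    · exact ⟨2 * m + 2, by subst hsp hk; ring, Or.inl ⟨m + 1, by ring⟩⟩
    · refine ⟨2 * m + 3, ?_, Or.inr hk⟩
      subst hsp hk; ring
  · refine ⟨2 * m + 2, ?_, Or.inl ⟨m + 1, by ring⟩⟩
    subst hsp hk
    obtain ⟨r, hr⟩ := hpe
    rw [show (2 * m + 2) * q = 2 * m * q + 2 * q from by ring]
    omega

lemma hs2k_of (hq : 2 < q) {c : ℕ} (hcq : s + 2 * k = c * q + 2) :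
    (s : ZMod q) = 2 - 2 * (k : ZMod q) := by
  haveI : NeZero q := ⟨by omega⟩
  have := congrArg (fun t : ℕ => (t : ZMod q)) hcq
  push_cast at this
  rw [ZMod.natCast_self] at this
  linear_combination this

lemma Gval [NeZero q] [NeZero s] (hq : 2 < q) (a : ZMod q) (b : ZMod s) :
    (phi q s (a, b)).1.val = (((q : ℤ) - a.val - b.val) % (q : ℤ)).toNat := by
  have hq0 : (q : ℤ) ≠ 0 := by exact_mod_cast (by omega : q ≠ 0)
  have hqpos : (0 : ℤ) < q := by exact_mod_cast (by omega : 0 < q)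
  have hmod : 0 ≤ ((q : ℤ) - a.val - b.val) % (q : ℤ) := Int.emod_nonneg _ hq0
  have hlt : ((q : ℤ) - a.val - b.val) % (q : ℤ) < q := Int.emod_lt_of_pos _ hqpos
  have htlt : (((q : ℤ) - a.val - b.val) % (q : ℤ)).toNat < q := by omega
  refine natEq (phi q s (a, b)).1.val_lt htlt ?_
  have h1 : (((((q : ℤ) - a.val - b.val) % (q : ℤ)).toNat : ℕ) : ℤ)
      = ((q : ℤ) - a.val - b.val) % (q : ℤ) := Int.toNat_of_nonneg hmod
  have h2 : (((((q : ℤ) - a.val - b.val) % (q : ℤ)).toNat : ℕ) : ZMod q)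
      = ((((q : ℤ) - a.val - b.val) % (q : ℤ) : ℤ) : ZMod q) := by
    rw [← h1]
    exact (Int.cast_natCast _).symm
  rw [h2, ZMod.intCast_mod]
  push_cast [ZMod.natCast_val]
  simp [phi, ZMod.natCast_val, ZMod.natCast_self]

end S19

/-- under condition C1, C2 or C3, in `Γ_{q,s,k}` one has
`∂((0,0),(a,b)) = â + b̂` iff `∂((a,b),(0,0)) = b̂ + g(a,b)`, where
`g(a,b) ∈ [0,q)` is congruent to `q - â - b̂` modulo `q`. -/
theorem stmt_19 (q s k m p : ℕ) (hq : 2 < q) (hs : 2 < s)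
    (hk1 : max 1 (q + 2 - s) ≤ k) (hk2 : k ≤ q)
    (hsp : s = 2 * m * q + p) (hp2q : p < 2 * q)
    (hC : (p = 0 ∧ k = 1) ∨ ((p = 2 ∨ p = q + 2) ∧ k = q) ∨
      (4 ≤ p ∧ p ≤ 2 * q - 2 ∧ Even p ∧ k = q + 1 - p / 2))
    (a : ZMod q) (b : ZMod s) :
    ddist (qskA q s k) ((0 : ZMod q), (0 : ZMod s)) (a, b) = a.val + b.val ↔
      ddist (qskA q s k) (a, b) ((0 : ZMod q), (0 : ZMod s)) =
        b.val + (((q : ℤ) - a.val - b.val) % (q : ℤ)).toNat := by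
  haveI : NeZero q := ⟨by omega⟩
  haveI : NeZero s := ⟨by omega⟩
  have hk1' : 1 ≤ k := le_trans (le_max_left _ _) hk1
  obtain ⟨c, hcq, hpar⟩ := S19.cond_c hq hsp hp2q hC
  have hs2k := S19.hs2k_of (k := k) hq hcq
  rw [S19.ddist_eq hq hs hk1' hk2 hs2k (a, b),
      S19.ddist_phi hq hs hk1' hk2 hs2k (a, b),
      S19.ddist_eq hq hs hk1' hk2 hs2k (S19.phi q s (a, b)),
      ← S19.Gval hq a b]
  constructor
  · intro h
    have hle : (a, b).1.val + (a, b).2.val ≤ S19.Wn q s k (a, b) := by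
      rw [S19.Dn] at h
      exact min_eq_left_iff.mp h
    have h2 := S19.arith_dir hq hs hk1' hk2 hcq hpar (a, b) hle
    rw [S19.Dn, min_eq_left h2]
    exact Nat.add_comm _ _
  · intro h
    have h' : S19.Dn q s k (S19.phi q s (a, b))
        = (S19.phi q s (a, b)).1.val + (S19.phi q s (a, b)).2.val := by
      rw [h]
      exact Nat.add_comm _ _
    have hle2 : (S19.phi q s (a, b)).1.val + (S19.phi q s (a, b)).2.val
        ≤ S19.Wn q s k (S19.phi q s (a, b)) := by
      rw [S19.Dn] at h'
      exact min_eq_left_iff.mp h'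
    have h2 := S19.arith_dir hq hs hk1' hk2 hcq hpar (S19.phi q s (a, b)) hle2
    rw [S19.phi_invol] at h2
    rw [S19.Dn, min_eq_left h2]
end
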